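/- arXiv:2312.12313 — 2 statements merged into one kernel-verified Lean document; each statement's English description precedes it below -/
import Mathlib

section
/- For every integer n ≥ 1: the zigzag snake graph Z_n has exactly n−1 internal edges (namely the sides shared by consecutive tiles); every perfect matching of Z_n contains at most one internal edge; for each internal edge e of Z_n there is exactly one perfect matching of Z_n containing e; and exactly two perfect matchings of Z_n contain no internal edge, and these two matchings are disjoint with union equal to the set of boundary edges of Z_n. -/
namespace Zigzag

/-- `cpt i` is the distinguished corner `c_i` of the `i`-th tile (for `1 ≤ i`):
`c_1 = (0,0)` and, for `1 ≤ i`, `c_{i+1} = c_i + (0,1)` if `i` is odd and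
`c_{i+1} = c_i + (1,0)` if `i` is even. -/
def cpt : ℕ → ℤ × ℤ
  | 0 => (0, 0)
  | 1 => (0, 0)
  | i + 2 => cpt (i + 1) + (if (i + 1) % 2 = 1 then ((0 : ℤ), (1 : ℤ)) else ((1 : ℤ), (0 : ℤ)))

/-- The `i`-th tile: the four lattice points `{c_i, c_i+(1,0), c_i+(0,1), c_i+(1,1)}`. -/
def tile (i : ℕ) : Set (ℤ × ℤ) :=
  {cpt i, cpt i + (1, 0), cpt i + (0, 1), cpt i + (1, 1)}

/-- The vertex set of the zigzag snake graph `Z n`: the union of the `n` tiles. -/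
def Vset (n : ℕ) : Set (ℤ × ℤ) := ⋃ i ∈ Set.Icc 1 n, tile i

/-- The zigzag snake graph `Z n`: two lattice points are adjacent exactly when they lie at
Euclidean distance 1 from each other and both belong to a common tile. -/
def Zgraph (n : ℕ) : SimpleGraph (ℤ × ℤ) where
  Adj a b := ((a.1 - b.1) ^ 2 + (a.2 - b.2) ^ 2 = 1) ∧
    ∃ i : ℕ, 1 ≤ i ∧ i ≤ n ∧ a ∈ tile i ∧ b ∈ tile i
  symm := by
    constructor
    rintro a b ⟨hd, i, hi1, hi2, ha, hb⟩
    exact ⟨by linear_combination hd, i, hi1, hi2, hb, ha⟩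
  loopless := by
    constructor
    rintro a ⟨hd, -⟩
    simp at hd

/-- A perfect matching of `Z n`: a set of edges of `Z n` such that every vertex of `Z n`
belongs to exactly one edge of the set. -/
def IsPerfectMatching (n : ℕ) (M : Set (Sym2 (ℤ × ℤ))) : Prop :=
  M ⊆ (Zgraph n).edgeSet ∧ ∀ v ∈ Vset n, ∃! e, e ∈ M ∧ v ∈ e

end Zigzag


namespace Zigzag

/-- An edge of `Z n` is internal if its two endpoints both belong to each of two
distinct tiles. -/
def IsInternalEdge (n : ℕ) (e : Sym2 (ℤ × ℤ)) : Prop :=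
  e ∈ (Zgraph n).edgeSet ∧ ∃ i j : ℕ, 1 ≤ i ∧ i ≤ n ∧ 1 ≤ j ∧ j ≤ n ∧ i ≠ j ∧
    ∀ v ∈ e, v ∈ tile i ∧ v ∈ tile j

/-- An edge of `Z n` is a boundary edge if it is not internal. -/
def IsBoundaryEdge (n : ℕ) (e : Sym2 (ℤ × ℤ)) : Prop :=
  e ∈ (Zgraph n).edgeSet ∧ ¬ IsInternalEdge n e

end Zigzag

/-!
Let `p j = spine j` run along the staircase `(0,0), (0,1), (1,1), (1,2), …` and let `q i = corner i`
be the vertex of tile `i` off it, so that tile `i` is `{p (i-1), p i, p (i+1), q i}`. The edges of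
`Z n` are the spine edges `p j p (j+1)` (`j ≤ n`) and the corner edges `p (i-1) q i`, `q i p (i+1)`;
the internal edges are the spine edges with `0 < j < n`.

In a perfect matching, sweeping from `p 0` shows that `q 1, …, q t` are matched backwards up to the
first spine edge `p t p (t+1)` of the matching; after it, every corner `q i` finds its backward
neighbour already taken and is matched forwards. So the perfect matchings are exactly the `n + 1`
matchings `matchingThrough n t`, and each of them contains exactly one spine edge.
-/

namespace Zigzag

def spine (j : ℕ) : ℤ × ℤ := ((j / 2 : ℕ), ((j + 1) / 2 : ℕ))

def corner (i : ℕ) : ℤ × ℤ := spine (i - 1) + spine (i + 1) - spine i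

lemma eq_spine_iff {v : ℤ × ℤ} {j : ℕ} :
    v = spine j ↔ v.1 + v.2 = j ∧ 0 ≤ v.2 - v.1 ∧ v.2 - v.1 ≤ 1 := by
  simp only [spine, Prod.ext_iff]
  omega

lemma eq_corner_iff {v : ℤ × ℤ} {i : ℕ} (hi : 1 ≤ i) :
    v = corner i ↔ v.1 + v.2 = i ∧ (v.2 - v.1 = -1 ∨ v.2 - v.1 = 2) := by
  simp only [corner, spine, Prod.ext_iff, Prod.fst_add, Prod.snd_add, Prod.fst_sub, Prod.snd_sub]
  omega

lemma spine_injective : Function.Injective spine := by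
  intro a b h
  simp only [spine, Prod.ext_iff] at h
  omega

lemma corner_ne_spine {i : ℕ} (hi : 1 ≤ i) (j : ℕ) : corner i ≠ spine j := by
  intro h
  have := eq_spine_iff.mp h
  have := (eq_corner_iff hi).mp rfl
  omega

lemma corner_inj {i k : ℕ} (hi : 1 ≤ i) (hk : 1 ≤ k) : corner i = corner k ↔ i = k := by
  refine ⟨fun h => ?_, congrArg corner⟩
  have := (eq_corner_iff hk).mp h
  have := (eq_corner_iff hi).mp rfl
  omega

lemma cpt_eq : ∀ i, cpt i = spine (i - 1)
  | 0 => rfl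
  | 1 => rfl
  | i + 2 => by
    rw [cpt, cpt_eq (i + 1)]
    split_ifs <;> simp only [spine, Prod.ext_iff, Prod.fst_add, Prod.snd_add] <;> omega

lemma tile_eq {i : ℕ} (hi : 1 ≤ i) :
    tile i = {spine (i - 1), spine i, spine (i + 1), corner i} := by
  ext v
  simp only [tile, cpt_eq, Set.mem_insert_iff, Set.mem_singleton_iff, eq_spine_iff,
    eq_corner_iff hi]
  simp only [spine, Prod.ext_iff, Prod.fst_add, Prod.snd_add]
  omega

lemma spine_mem_tile {i j : ℕ} (hi : 1 ≤ i) (hij : i ≤ j + 1) (hji : j ≤ i + 1) :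
    spine j ∈ tile i := by
  rw [tile_eq hi]
  rcases (by omega : j = i - 1 ∨ j = i ∨ j = i + 1) with rfl | rfl | rfl <;> simp

lemma corner_mem_tile (i : ℕ) (hi : 1 ≤ i) : corner i ∈ tile i := by
  rw [tile_eq hi]
  simp

lemma eq_spine_of_mem_tile_inter {i j : ℕ} {v : ℤ × ℤ} (hi : 1 ≤ i) (hij : i < j)
    (hvi : v ∈ tile i) (hvj : v ∈ tile j) :
    j ≤ i + 2 ∧ (v = spine (j - 1) ∨ v = spine (i + 1)) := by
  rw [tile_eq hi] at hvi
  rw [tile_eq (by omega)] at hvj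
  simp only [Set.mem_insert_iff, Set.mem_singleton_iff, eq_spine_iff, eq_corner_iff hi,
    eq_corner_iff (show 1 ≤ j by omega)] at hvi hvj ⊢
  omega

lemma sq_add_sq_eq_one_iff {x y : ℤ} :
    x ^ 2 + y ^ 2 = 1 ↔ (x = 0 ∧ (y = 1 ∨ y = -1)) ∨ ((x = 1 ∨ x = -1) ∧ y = 0) := by
  constructor
  · intro h
    have : -1 ≤ x ∧ x ≤ 1 := ⟨by nlinarith, by nlinarith⟩
    have : -1 ≤ y ∧ y ≤ 1 := ⟨by nlinarith, by nlinarith⟩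
    rcases (by omega : x = -1 ∨ x = 0 ∨ x = 1) with rfl | rfl | rfl <;>
      rcases (by omega : y = -1 ∨ y = 0 ∨ y = 1) with rfl | rfl | rfl <;> revert h <;> norm_num
  · rintro (⟨rfl, rfl | rfl⟩ | ⟨rfl | rfl, rfl⟩) <;> norm_num

lemma zgraph_adj_iff {n : ℕ} {a b : ℤ × ℤ} :
    (Zgraph n).Adj a b ↔
      ((a.1 - b.1 = 0 ∧ (a.2 - b.2 = 1 ∨ a.2 - b.2 = -1)) ∨
        ((a.1 - b.1 = 1 ∨ a.1 - b.1 = -1) ∧ a.2 - b.2 = 0)) ∧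
      ∃ i, 1 ≤ i ∧ i ≤ n ∧ a ∈ tile i ∧ b ∈ tile i := by
  rw [← sq_add_sq_eq_one_iff]
  rfl

lemma adj_spine {n j : ℕ} {w : ℤ × ℤ} (h : (Zgraph n).Adj (spine j) w) :
    (1 ≤ j ∧ w = spine (j - 1)) ∨ (j ≤ n ∧ w = spine (j + 1)) ∨
      (2 ≤ j ∧ w = corner (j - 1)) ∨ (j + 1 ≤ n ∧ w = corner (j + 1)) := by
  obtain ⟨hd, i, hi, hin, ha, hb⟩ := zgraph_adj_iff.mp h
  have hv := (eq_spine_iff (v := spine j)).mp rfl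
  generalize spine j = v at ha hb hd hv
  rw [tile_eq hi] at ha hb
  simp only [Set.mem_insert_iff, Set.mem_singleton_iff, eq_spine_iff, eq_corner_iff hi] at ha hb
  rw [eq_spine_iff, eq_spine_iff, eq_corner_iff (i := j + 1) (by omega)]
  by_cases hj : 2 ≤ j
  · rw [eq_corner_iff (i := j - 1) (by omega)]
    omega
  · simp only [hj, false_and, false_or]
    omega

lemma adj_corner {n i : ℕ} (hi : 1 ≤ i) {w : ℤ × ℤ} (h : (Zgraph n).Adj (corner i) w) :
    w = spine (i - 1) ∨ w = spine (i + 1) := by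
  obtain ⟨hd, k, hk, hkn, ha, hb⟩ := zgraph_adj_iff.mp h
  have hv := (eq_corner_iff hi (v := corner i)).mp rfl
  generalize corner i = v at ha hb hd hv
  rw [tile_eq hk] at ha hb
  simp only [Set.mem_insert_iff, Set.mem_singleton_iff, eq_spine_iff, eq_corner_iff hk]
    at ha hb ⊢
  omega

lemma mem_Vset_iff {n : ℕ} (hn : 1 ≤ n) {v : ℤ × ℤ} :
    v ∈ Vset n ↔ (∃ j ≤ n + 1, v = spine j) ∨ ∃ i, 1 ≤ i ∧ i ≤ n ∧ v = corner i := by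
  simp only [Vset, Set.mem_iUnion, Set.mem_Icc, exists_prop]
  constructor
  · rintro ⟨i, ⟨hi, hin⟩, hv⟩
    rw [tile_eq hi] at hv
    rcases hv with rfl | rfl | rfl | rfl
    exacts [Or.inl ⟨i - 1, by omega, rfl⟩, Or.inl ⟨i, by omega, rfl⟩,
      Or.inl ⟨i + 1, by omega, rfl⟩, Or.inr ⟨i, hi, hin, rfl⟩]
  · rintro (⟨j, hj, rfl⟩ | ⟨i, hi, hin, rfl⟩)
    · exact ⟨max 1 (min j n), ⟨by omega, by omega⟩,
        spine_mem_tile (by omega) (by omega) (by omega)⟩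
    · exact ⟨i, ⟨hi, hin⟩, corner_mem_tile i hi⟩

lemma spine_mem_Vset {n j : ℕ} (hn : 1 ≤ n) (hj : j ≤ n + 1) : spine j ∈ Vset n :=
  (mem_Vset_iff hn).mpr (Or.inl ⟨j, hj, rfl⟩)

lemma corner_mem_Vset {n i : ℕ} (hi : 1 ≤ i) (hin : i ≤ n) : corner i ∈ Vset n :=
  Set.mem_biUnion ⟨hi, hin⟩ (corner_mem_tile i hi)

lemma mem_Vset_of_adj {n : ℕ} {v w : ℤ × ℤ} (h : (Zgraph n).Adj v w) : v ∈ Vset n := by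
  obtain ⟨-, i, hi, hin, hv, -⟩ := h
  exact Set.mem_biUnion ⟨hi, hin⟩ hv

def spineEdge (j : ℕ) : Sym2 (ℤ × ℤ) := s(spine j, spine (j + 1))

def leftCornerEdge (i : ℕ) : Sym2 (ℤ × ℤ) := s(spine (i - 1), corner i)

def rightCornerEdge (i : ℕ) : Sym2 (ℤ × ℤ) := s(corner i, spine (i + 1))

lemma spineEdge_injective : Function.Injective spineEdge := by
  intro a b h
  simp only [spineEdge, Sym2.eq_iff, Prod.ext_iff, spine] at h
  omega

lemma corner_not_mem_spineEdge {i : ℕ} (hi : 1 ≤ i) (j : ℕ) : corner i ∉ spineEdge j := by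
  rw [spineEdge, Sym2.mem_iff]
  rintro (h | h) <;> exact corner_ne_spine hi _ h

lemma leftCornerEdge_ne_rightCornerEdge {i : ℕ} (hi : 1 ≤ i) (k : ℕ) :
    leftCornerEdge i ≠ rightCornerEdge k := by
  simp only [leftCornerEdge, rightCornerEdge, Ne, Sym2.eq_iff, Prod.ext_iff, corner, spine,
    Prod.fst_add, Prod.snd_add, Prod.fst_sub, Prod.snd_sub]
  omega

lemma spineEdge_mem_edgeSet {n j : ℕ} (hn : 1 ≤ n) (hj : j ≤ n) :
    spineEdge j ∈ (Zgraph n).edgeSet := by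
  refine zgraph_adj_iff.mpr ⟨?_, max 1 j, by omega, by omega,
    spine_mem_tile (by omega) (by omega) (by omega),
    spine_mem_tile (by omega) (by omega) (by omega)⟩
  simp only [spine]
  omega

lemma leftCornerEdge_mem_edgeSet {n i : ℕ} (hi : 1 ≤ i) (hin : i ≤ n) :
    leftCornerEdge i ∈ (Zgraph n).edgeSet := by
  refine zgraph_adj_iff.mpr ⟨?_, i, hi, hin,
    spine_mem_tile hi (by omega) (by omega), corner_mem_tile i hi⟩
  simp only [corner, spine, Prod.fst_add, Prod.snd_add, Prod.fst_sub, Prod.snd_sub]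
  omega

lemma rightCornerEdge_mem_edgeSet {n i : ℕ} (hi : 1 ≤ i) (hin : i ≤ n) :
    rightCornerEdge i ∈ (Zgraph n).edgeSet := by
  refine zgraph_adj_iff.mpr ⟨?_, i, hi, hin,
    corner_mem_tile i hi, spine_mem_tile hi (by omega) (by omega)⟩
  simp only [corner, spine, Prod.fst_add, Prod.snd_add, Prod.fst_sub, Prod.snd_sub]
  omega

lemma eq_spineEdge_or_cornerEdge {n : ℕ} (hn : 1 ≤ n) {e : Sym2 (ℤ × ℤ)}
    (he : e ∈ (Zgraph n).edgeSet) :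
    (∃ j ≤ n, e = spineEdge j) ∨ (∃ i, 1 ≤ i ∧ i ≤ n ∧ e = leftCornerEdge i) ∨
      ∃ i, 1 ≤ i ∧ i ≤ n ∧ e = rightCornerEdge i := by
  induction e using Sym2.ind with
  | _ a b =>
  rcases (mem_Vset_iff hn).mp (mem_Vset_of_adj he) with ⟨j, hj, rfl⟩ | ⟨i, hi, hin, rfl⟩
  · rcases adj_spine he with ⟨hj1, rfl⟩ | ⟨hjn, rfl⟩ | ⟨hj2, rfl⟩ | ⟨hjn, rfl⟩
    · refine Or.inl ⟨j - 1, by omega, ?_⟩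
      rw [spineEdge, Nat.sub_add_cancel hj1, Sym2.eq_swap]
    · exact Or.inl ⟨j, hjn, rfl⟩
    · refine Or.inr (Or.inr ⟨j - 1, by omega, by omega, ?_⟩)
      rw [rightCornerEdge, Nat.sub_add_cancel (by omega), Sym2.eq_swap]
    · exact Or.inr (Or.inl ⟨j + 1, by omega, hjn, by simp [leftCornerEdge]⟩)
  · rcases adj_corner hi he with rfl | rfl
    · exact Or.inr (Or.inl ⟨i, hi, hin, Sym2.eq_swap⟩)
    · exact Or.inr (Or.inr ⟨i, hi, hin, rfl⟩)

lemma isInternalEdge_iff {n : ℕ} {e : Sym2 (ℤ × ℤ)} :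
    IsInternalEdge n e ↔ ∃ i, 1 ≤ i ∧ i < n ∧ e = spineEdge i := by
  constructor
  · rintro ⟨he, i, j, hi, hin, hj, hjn, hij, hmem⟩
    induction e using Sym2.ind with
    | _ a b =>
    obtain ⟨hd, -⟩ := zgraph_adj_iff.mp ((Zgraph n).mem_edgeSet.mp he)
    obtain ⟨hai, haj⟩ := hmem a (Sym2.mem_mk_left a b)
    obtain ⟨hbi, hbj⟩ := hmem b (Sym2.mem_mk_right a b)
    wlog hlt : i < j generalizing i j
    · exact this j i hj hjn hi hin hij.symm (fun v hv => (hmem v hv).symm) haj hai hbj hbi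
        (by omega)
    have ha := eq_spine_of_mem_tile_inter hi hlt hai haj
    have hb := eq_spine_of_mem_tile_inter hi hlt hbi hbj
    refine ⟨i, hi, by omega, ?_⟩
    rw [eq_spine_iff, eq_spine_iff] at ha hb
    rw [spineEdge, Sym2.eq_iff, eq_spine_iff, eq_spine_iff, eq_spine_iff, eq_spine_iff]
    omega
  · rintro ⟨i, hi, hin, rfl⟩
    refine ⟨spineEdge_mem_edgeSet (by omega) hin.le, i, i + 1, hi, hin.le, by omega, hin,
      by omega, ?_⟩
    intro v hv
    rw [spineEdge, Sym2.mem_iff] at hv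
    rcases hv with rfl | rfl
    all_goals exact ⟨spine_mem_tile hi (by omega) (by omega),
      spine_mem_tile (by omega) (by omega) (by omega)⟩

lemma setOf_isInternalEdge_eq (n : ℕ) :
    {e | IsInternalEdge n e} = spineEdge '' Set.Ioo 0 n := by
  ext e
  simp only [Set.mem_ofPred_eq, isInternalEdge_iff, Set.mem_image, Set.mem_Ioo]
  constructor
  · rintro ⟨i, hi, hin, rfl⟩
    exact ⟨i, ⟨hi, hin⟩, rfl⟩
  · rintro ⟨i, ⟨hi, hin⟩, rfl⟩
    exact ⟨i, hi, hin, rfl⟩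

section PerfectMatching

variable {n : ℕ} {M M' : Set (Sym2 (ℤ × ℤ))}

lemma isPerfectMatching_iff :
    IsPerfectMatching n M ↔ M ⊆ (Zgraph n).edgeSet ∧ (∀ v ∈ Vset n, ∃ w, s(v, w) ∈ M) ∧
      ∀ v w w', s(v, w) ∈ M → s(v, w') ∈ M → w = w' := by
  constructor
  · rintro ⟨hsub, hcov⟩
    refine ⟨hsub, fun v hv => ?_, fun v w w' h h' => ?_⟩
    · obtain ⟨e, ⟨he, hve⟩, -⟩ := hcov v hv
      exact ⟨Sym2.Mem.other hve, by rwa [Sym2.other_spec hve]⟩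
    · obtain ⟨e, -, huniq⟩ := hcov v (mem_Vset_of_adj (hsub h))
      exact Sym2.congr_right.mp
        ((huniq _ ⟨h, Sym2.mem_mk_left v w⟩).trans (huniq _ ⟨h', Sym2.mem_mk_left v w'⟩).symm)
  · rintro ⟨hsub, hex, huniq⟩
    refine ⟨hsub, fun v hv => ?_⟩
    obtain ⟨w, hw⟩ := hex v hv
    refine ⟨s(v, w), ⟨hw, Sym2.mem_mk_left v w⟩, ?_⟩
    rintro e ⟨he, hve⟩
    rw [← Sym2.other_spec hve] at he ⊢
    rw [huniq _ _ _ he hw]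

namespace IsPerfectMatching

lemma exists_partner (hM : IsPerfectMatching n M) {v : ℤ × ℤ} (hv : v ∈ Vset n) :
    ∃ w, s(v, w) ∈ M :=
  (isPerfectMatching_iff.mp hM).2.1 v hv

lemma partner_unique (hM : IsPerfectMatching n M) {v w w' : ℤ × ℤ} (h : s(v, w) ∈ M)
    (h' : s(v, w') ∈ M) : w = w' :=
  (isPerfectMatching_iff.mp hM).2.2 v w w' h h'

lemma eq_of_subset (hM : IsPerfectMatching n M) (hM' : IsPerfectMatching n M') (h : M' ⊆ M) :
    M' = M := by
  refine h.antisymm fun e he => ?_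
  induction e using Sym2.ind with
  | _ v w =>
  obtain ⟨w', hw'⟩ := hM'.exists_partner (mem_Vset_of_adj (hM.1 he))
  rwa [hM.partner_unique he (h hw')]

end IsPerfectMatching

end PerfectMatching

def matchingThrough (n t : ℕ) : Set (Sym2 (ℤ × ℤ)) :=
  {e | e = spineEdge t ∨ (∃ i, 1 ≤ i ∧ i ≤ t ∧ e = leftCornerEdge i) ∨
    ∃ i, t < i ∧ i ≤ n ∧ e = rightCornerEdge i}

lemma matchingThrough_subset_edgeSet {n t : ℕ} (hn : 1 ≤ n) (ht : t ≤ n) :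
    matchingThrough n t ⊆ (Zgraph n).edgeSet := by
  rintro e (rfl | ⟨i, hi, hit, rfl⟩ | ⟨i, hti, hin, rfl⟩)
  exacts [spineEdge_mem_edgeSet hn ht, leftCornerEdge_mem_edgeSet hi (hit.trans ht),
    rightCornerEdge_mem_edgeSet (by omega) hin]

lemma exists_mem_matchingThrough {n t : ℕ} (hn : 1 ≤ n) (ht : t ≤ n) {v : ℤ × ℤ}
    (hv : v ∈ Vset n) : ∃ w, s(v, w) ∈ matchingThrough n t := by
  rcases (mem_Vset_iff hn).mp hv with ⟨j, hj, rfl⟩ | ⟨i, hi, hin, rfl⟩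
  · rcases (by omega : j < t ∨ j = t ∨ j = t + 1 ∨ t + 1 < j) with h | rfl | rfl | h
    · refine ⟨corner (j + 1), Or.inr (Or.inl ⟨j + 1, by omega, by omega, ?_⟩)⟩
      simp [leftCornerEdge]
    · exact ⟨spine (j + 1), Or.inl rfl⟩
    · exact ⟨spine t, Or.inl Sym2.eq_swap⟩
    · refine ⟨corner (j - 1), Or.inr (Or.inr ⟨j - 1, by omega, by omega, ?_⟩)⟩
      rw [rightCornerEdge, Nat.sub_add_cancel (by omega), Sym2.eq_swap]
  · by_cases h : i ≤ t
    · exact ⟨spine (i - 1), Or.inr (Or.inl ⟨i, hi, h, Sym2.eq_swap⟩)⟩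
    · exact ⟨spine (i + 1), Or.inr (Or.inr ⟨i, by omega, hin, rfl⟩)⟩

lemma partner_unique_matchingThrough {n t : ℕ} {v w w' : ℤ × ℤ}
    (h : s(v, w) ∈ matchingThrough n t) (h' : s(v, w') ∈ matchingThrough n t) : w = w' := by
  rcases h with h | ⟨i, hi, hit, h⟩ | ⟨i, hti, hin, h⟩ <;>
  rcases h' with h' | ⟨k, hk, hkt, h'⟩ | ⟨k, htk, hkn, h'⟩ <;>
  · simp only [spineEdge, leftCornerEdge, rightCornerEdge, Sym2.eq_iff, Prod.ext_iff, corner,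
      spine, Prod.fst_add, Prod.snd_add, Prod.fst_sub, Prod.snd_sub] at h h' ⊢
    omega

lemma matchingThrough_isPerfectMatching {n t : ℕ} (hn : 1 ≤ n) (ht : t ≤ n) :
    IsPerfectMatching n (matchingThrough n t) :=
  isPerfectMatching_iff.mpr ⟨matchingThrough_subset_edgeSet hn ht,
    fun _ hv => exists_mem_matchingThrough hn ht hv, fun _ _ _ => partner_unique_matchingThrough⟩

lemma spineEdge_mem_matchingThrough_iff {n t i : ℕ} :
    spineEdge i ∈ matchingThrough n t ↔ i = t := by
  refine ⟨?_, fun h => Or.inl (h ▸ rfl)⟩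
  rintro (h | ⟨k, hk, -, h⟩ | ⟨k, hk, -, h⟩)
  · exact spineEdge_injective h
  · exact (corner_not_mem_spineEdge hk i (h ▸ Sym2.mem_mk_right _ _)).elim
  · exact (corner_not_mem_spineEdge (i := k) (by omega) i
      (h ▸ Sym2.mem_mk_left _ _)).elim

lemma forall_not_isInternalEdge_iff {n t : ℕ} (ht : t ≤ n) :
    (∀ e ∈ matchingThrough n t, ¬ IsInternalEdge n e) ↔ t = 0 ∨ t = n := by
  constructor
  · intro h
    have := h _ (spineEdge_mem_matchingThrough_iff.mpr rfl)
    rw [isInternalEdge_iff] at this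
    by_contra hne
    exact this ⟨t, by omega, by omega, rfl⟩
  · rintro hend e he hie
    obtain ⟨i, hi, hin, rfl⟩ := isInternalEdge_iff.mp hie
    have := spineEdge_mem_matchingThrough_iff.mp he
    omega

lemma matchingThrough_zero_inter_self {n : ℕ} (hn : 1 ≤ n) :
    matchingThrough n 0 ∩ matchingThrough n n = ∅ := by
  refine Set.eq_empty_of_forall_notMem fun e ⟨h₀, hₙ⟩ => ?_
  rcases h₀ with rfl | ⟨i, hi, hi0, -⟩ | ⟨i, hi, hin, rfl⟩
  · have := spineEdge_mem_matchingThrough_iff.mp hₙ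
    omega
  · omega
  · rcases hₙ with h | ⟨k, hk, -, h⟩ | ⟨k, hk, hkn, -⟩
    · exact corner_not_mem_spineEdge hi n (h ▸ Sym2.mem_mk_left _ _)
    · exact leftCornerEdge_ne_rightCornerEdge hk i h.symm
    · omega

lemma matchingThrough_zero_union_self {n : ℕ} (hn : 1 ≤ n) :
    matchingThrough n 0 ∪ matchingThrough n n = {e | IsBoundaryEdge n e} := by
  ext e
  constructor
  · rintro (he | he)
    · exact ⟨matchingThrough_subset_edgeSet hn (Nat.zero_le n) he,
        (forall_not_isInternalEdge_iff (Nat.zero_le n)).mpr (Or.inl rfl) e he⟩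
    · exact ⟨matchingThrough_subset_edgeSet hn le_rfl he,
        (forall_not_isInternalEdge_iff le_rfl).mpr (Or.inr rfl) e he⟩
  · rintro ⟨he, hie⟩
    rcases eq_spineEdge_or_cornerEdge hn he with ⟨j, hj, rfl⟩ | ⟨i, hi, hin, rfl⟩ |
      ⟨i, hi, hin, rfl⟩
    · rcases (by omega : j = 0 ∨ j = n ∨ 1 ≤ j ∧ j < n) with rfl | rfl | hj
      · exact Or.inl (Or.inl rfl)
      · exact Or.inr (Or.inl rfl)
      · exact absurd (isInternalEdge_iff.mpr ⟨j, hj.1, hj.2, rfl⟩) hie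
    · exact Or.inr (Or.inr (Or.inl ⟨i, hi, hin, rfl⟩))
    · exact Or.inl (Or.inr (Or.inr ⟨i, by omega, hin, rfl⟩))

namespace IsPerfectMatching

variable {n : ℕ} {M : Set (Sym2 (ℤ × ℤ))}

lemma spineEdge_mem_or_leftCornerEdge_mem (hM : IsPerfectMatching n M) (hn : 1 ≤ n) {s : ℕ}
    (hs : s ≤ n) (hleft : ∀ i, 1 ≤ i → i ≤ s → leftCornerEdge i ∈ M) :
    spineEdge s ∈ M ∨ s + 1 ≤ n ∧ leftCornerEdge (s + 1) ∈ M := by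
  obtain ⟨w, hw⟩ := hM.exists_partner (spine_mem_Vset (j := s) hn (by omega))
  rcases adj_spine (hM.1 hw) with ⟨hs1, rfl⟩ | ⟨-, rfl⟩ | ⟨hs2, rfl⟩ | ⟨hsn, rfl⟩
  · rw [Sym2.eq_swap] at hw
    exact absurd (hM.partner_unique (hleft s hs1 le_rfl) hw) (corner_ne_spine hs1 s)
  · exact Or.inl hw
  · have h := hleft (s - 1) (by omega) (by omega)
    rw [leftCornerEdge, Sym2.eq_swap] at h
    rw [Sym2.eq_swap] at hw
    have := spine_injective (hM.partner_unique h hw)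
    omega
  · exact Or.inr ⟨hsn, by simpa [leftCornerEdge] using hw⟩

lemma exists_spineEdge_mem (hM : IsPerfectMatching n M) (hn : 1 ≤ n) (s : ℕ) (hs : s ≤ n)
    (hleft : ∀ i, 1 ≤ i → i ≤ s → leftCornerEdge i ∈ M) :
    ∃ t, t ≤ n ∧ spineEdge t ∈ M ∧ ∀ i, 1 ≤ i → i ≤ t → leftCornerEdge i ∈ M := by
  rcases hM.spineEdge_mem_or_leftCornerEdge_mem hn hs hleft with h | ⟨hsn, h⟩
  · exact ⟨s, hs, h, hleft⟩
  · refine hM.exists_spineEdge_mem hn (s + 1) hsn fun i hi his => ?_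
    rcases Nat.lt_or_eq_of_le his with his | rfl
    exacts [hleft i hi (by omega), h]
termination_by n - s

lemma rightCornerEdge_mem (hM : IsPerfectMatching n M) {t : ℕ}
    (ht : spineEdge t ∈ M) (i : ℕ) (hti : t < i) (hin : i ≤ n) : rightCornerEdge i ∈ M := by
  induction i using Nat.strong_induction_on with
  | _ i ih =>
  obtain ⟨w, hw⟩ := hM.exists_partner (corner_mem_Vset (by omega) hin)
  rcases adj_corner (by omega) (hM.1 hw) with rfl | rfl
  · exfalso
    rw [Sym2.eq_swap] at hw
    rcases (by omega : i = t + 1 ∨ i = t + 2 ∨ t + 3 ≤ i) with rfl | rfl | h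
    · exact corner_ne_spine (by omega) _ (hM.partner_unique hw ht)
    · rw [spineEdge, Sym2.eq_swap] at ht
      exact corner_ne_spine (by omega) _ (hM.partner_unique hw ht)
    · have h' := ih (i - 2) (by omega) (by omega) (by omega)
      rw [rightCornerEdge, Sym2.eq_swap, show i - 2 + 1 = i - 1 by omega] at h'
      have := (corner_inj (by omega) (by omega)).mp (hM.partner_unique hw h')
      omega
  · exact hw

theorem eq_matchingThrough (hM : IsPerfectMatching n M) (hn : 1 ≤ n) :
    ∃ t, t ≤ n ∧ M = matchingThrough n t := by
  obtain ⟨t, htn, ht, hleft⟩ := hM.exists_spineEdge_mem hn 0 (Nat.zero_le n) (by omega)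
  refine ⟨t, htn, (hM.eq_of_subset (matchingThrough_isPerfectMatching hn htn) ?_).symm⟩
  rintro e (rfl | ⟨i, hi, hit, rfl⟩ | ⟨i, hti, hin, rfl⟩)
  exacts [ht, hleft i hi hit, hM.rightCornerEdge_mem ht i hti hin]

end IsPerfectMatching

end Zigzag

/-- For every integer `n ≥ 1`: the zigzag snake graph `Z n` has exactly `n - 1` internal
edges; every perfect matching of `Z n` contains at most one internal edge; for each
internal edge `e` of `Z n` there is exactly one perfect matching of `Z n` containing `e`;
and exactly two perfect matchings of `Z n` contain no internal edge, and these two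
matchings are disjoint with union equal to the set of boundary edges of `Z n`. -/
theorem statement_1 (n : ℕ) (hn : 1 ≤ n) :
    {e | Zigzag.IsInternalEdge n e}.ncard = n - 1 ∧
    (∀ M : Set (Sym2 (ℤ × ℤ)), Zigzag.IsPerfectMatching n M →
      ∀ e₁ ∈ M, ∀ e₂ ∈ M, Zigzag.IsInternalEdge n e₁ → Zigzag.IsInternalEdge n e₂ →
        e₁ = e₂) ∧
    (∀ e : Sym2 (ℤ × ℤ), Zigzag.IsInternalEdge n e →
      ∃! M : Set (Sym2 (ℤ × ℤ)), Zigzag.IsPerfectMatching n M ∧ e ∈ M) ∧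
    (∃ M₁ M₂ : Set (Sym2 (ℤ × ℤ)), M₁ ≠ M₂ ∧
      Zigzag.IsPerfectMatching n M₁ ∧ Zigzag.IsPerfectMatching n M₂ ∧
      (∀ e ∈ M₁, ¬ Zigzag.IsInternalEdge n e) ∧
      (∀ e ∈ M₂, ¬ Zigzag.IsInternalEdge n e) ∧
      (∀ M : Set (Sym2 (ℤ × ℤ)), Zigzag.IsPerfectMatching n M →
        (∀ e ∈ M, ¬ Zigzag.IsInternalEdge n e) → M = M₁ ∨ M = M₂) ∧
      M₁ ∩ M₂ = ∅ ∧ M₁ ∪ M₂ = {e | Zigzag.IsBoundaryEdge n e}) := by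
  open Zigzag in
  refine ⟨?_, ?_, ?_, ?_⟩
  · rw [setOf_isInternalEdge_eq n, Set.ncard_image_of_injective _ spineEdge_injective,
      Set.ncard_Ioo_nat, Nat.sub_zero]
  · intro M hM e₁ he₁ e₂ he₂ hi₁ hi₂
    obtain ⟨t, -, rfl⟩ := hM.eq_matchingThrough hn
    obtain ⟨i, -, -, rfl⟩ := isInternalEdge_iff.mp hi₁
    obtain ⟨k, -, -, rfl⟩ := isInternalEdge_iff.mp hi₂
    rw [spineEdge_mem_matchingThrough_iff.mp he₁, spineEdge_mem_matchingThrough_iff.mp he₂]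
  · intro e he
    obtain ⟨i, -, hin, rfl⟩ := isInternalEdge_iff.mp he
    refine ⟨matchingThrough n i,
      ⟨matchingThrough_isPerfectMatching hn hin.le, Or.inl rfl⟩, ?_⟩
    rintro M ⟨hM, hiM⟩
    obtain ⟨t, -, rfl⟩ := hM.eq_matchingThrough hn
    rw [spineEdge_mem_matchingThrough_iff.mp hiM]
  · refine ⟨matchingThrough n 0, matchingThrough n n, fun h => ?_,
      matchingThrough_isPerfectMatching hn (Nat.zero_le n),
      matchingThrough_isPerfectMatching hn le_rfl,
      (forall_not_isInternalEdge_iff (Nat.zero_le n)).mpr (Or.inl rfl),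
      (forall_not_isInternalEdge_iff le_rfl).mpr (Or.inr rfl), fun M hM hno => ?_,
      matchingThrough_zero_inter_self hn, matchingThrough_zero_union_self hn⟩
    · have := spineEdge_mem_matchingThrough_iff.mp
        (h ▸ spineEdge_mem_matchingThrough_iff.mpr rfl : spineEdge 0 ∈ matchingThrough n n)
      omega
    · obtain ⟨t, ht, rfl⟩ := hM.eq_matchingThrough hn
      rcases (forall_not_isInternalEdge_iff ht).mp hno with rfl | rfl
      exacts [Or.inl rfl, Or.inr rfl]
end

section
/- Let 𝓘 be a maximal nested collection on the vertex set V of a finite tree Γ. Then every nonempty connected subset S ⊆ V contains a unique vertex m with S ⊆ I_m; equivalently, S has a unique maximum with respect to the order v ≤_𝓘 w defined by v ∈ I_w. -/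
namespace Paper

variable {V : Type*}

/-- The subgraph of `G` induced on `S` is connected (any two vertices of `S` are joined
by a walk inside `S`). -/
def Conn (G : SimpleGraph V) (S : Set V) : Prop := (G.induce S).Preconnected

/-- `C` is a connected component of (the subgraph of `G` induced on) `U`:
a maximal nonempty connected subset of `U`. -/
def IsCompOf (G : SimpleGraph V) (C U : Set V) : Prop :=
  C.Nonempty ∧ C ⊆ U ∧ Conn G C ∧
    ∀ D : Set V, C ⊆ D → D ⊆ U → Conn G D → D = C

/-- A nested collection on (the vertex set of) `G`: a family of nonempty connected
subsets such that (1) any two members are nested or disjoint, and (2) the connected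
components of the union of any pairwise disjoint subfamily are exactly the members of
that subfamily. -/
def Nested (G : SimpleGraph V) (𝓘 : Set (Set V)) : Prop :=
  (∀ S ∈ 𝓘, S.Nonempty ∧ Conn G S) ∧
  (∀ S ∈ 𝓘, ∀ T ∈ 𝓘, S ⊆ T ∨ T ⊆ S ∨ S ∩ T = ∅) ∧
  (∀ 𝓙 ⊆ 𝓘, (𝓙.Pairwise fun A B => A ∩ B = ∅) →
    ∀ C : Set V, IsCompOf G C (⋃₀ 𝓙) ↔ C ∈ 𝓙)

/-- A maximal nested collection: a nested collection whose union is all of `V` and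
which is not properly contained in any other nested collection. -/
def MaxNested (G : SimpleGraph V) (𝓘 : Set (Set V)) : Prop :=
  Nested G 𝓘 ∧ ⋃₀ 𝓘 = Set.univ ∧
    ∀ 𝓙 : Set (Set V), Nested G 𝓙 → 𝓘 ⊆ 𝓙 → 𝓙 = 𝓘

/-- `Iv` assigns to each vertex `v` the smallest element of `𝓘` containing `v`
(denoted `I_v`). -/
def IsLeastContaining (𝓘 : Set (Set V)) (Iv : V → Set V) : Prop :=
  ∀ v : V, Iv v ∈ 𝓘 ∧ v ∈ Iv v ∧ ∀ J ∈ 𝓘, v ∈ J → Iv v ⊆ J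

/-- The vertex set `[x,y]` of the unique path in a tree `G` from `x` to `y`:
the vertices lying on every path from `x` to `y`. -/
def interval (G : SimpleGraph V) (x y : V) : Set V :=
  {u | ∀ p : G.Walk x y, p.IsPath → u ∈ p.support}

/-- `S` is rooted with respect to the nested collection (with least-member function
`Iv`): `S` is nonempty, connected, and, `m` denoting the unique element of `S` with
`S ⊆ I_m`, for all `i, j ∈ S` one has `i ∈ I_j` iff `j ∈ [i, m]`. -/
def Rooted (G : SimpleGraph V) (Iv : V → Set V) (S : Set V) : Prop :=
  S.Nonempty ∧ Conn G S ∧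
    ∃ m ∈ S, S ⊆ Iv m ∧ ∀ i ∈ S, ∀ j ∈ S, (i ∈ Iv j ↔ j ∈ interval G i m)

/-- `S̄ := {v ∈ S : I_v ⊄ S}`. -/
def bar (Iv : V → Set V) (S : Set V) : Set V := {v ∈ S | ¬ Iv v ⊆ S}

/-- `S` is weakly rooted: `S` is nonempty, connected, and either `S̄ = ∅` or `S̄` is a
(nonempty) connected rooted set. -/
def WeaklyRooted (G : SimpleGraph V) (Iv : V → Set V) (S : Set V) : Prop :=
  S.Nonempty ∧ Conn G S ∧ (bar Iv S = ∅ ∨ Rooted G Iv (bar Iv S))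

/-- Two (nonempty connected) subsets `I`, `J` are compatible if `I ⊆ J`, or `J ⊆ I`, or
they are disjoint and no edge of `G` joins a vertex of `I` to a vertex of `J`. -/
def Compatible (G : SimpleGraph V) (I J : Set V) : Prop :=
  I ⊆ J ∨ J ⊆ I ∨ (I ∩ J = ∅ ∧ ∀ a ∈ I, ∀ b ∈ J, ¬ G.Adj a b)

end Paper

/-!
Condition (2) of a nested collection says exactly that disjoint members are not joined by an
edge, so on a finite graph a family is nested iff its members are nonempty, connected and
pairwise compatible. In a pairwise compatible family, a connected set covered by the family lies
inside a single member (a maximal one through any of its vertices); applied to the sets `I_v`,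
`v ∈ S`, this gives a vertex `m ∈ S` with `S ⊆ I_m`. Uniqueness amounts to the injectivity of
`v ↦ I_v`: if `I_m = I_{m'}` with `m ≠ m'`, the component of `I_m \ {m'}` containing `m` is
compatible with every member of `𝓘` but not a member, contradicting maximality.
-/

namespace Paper

open SimpleGraph Set

variable {V : Type*} {G : SimpleGraph V}

section Connectivity

variable {S T U C D : Set V}

lemma conn_singleton (a : V) : Conn G {a} := fun x y => by
  rw [Subsingleton.elim x y]

lemma Conn.union (hS : Conn G S) (hT : Conn G T) (h : (S ∩ T).Nonempty) : Conn G (S ∪ T) :=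
  (induce_union_connected hS hT h).preconnected

lemma Conn.union_of_adj (hS : Conn G S) (hT : Conn G T) {a b : V} (ha : a ∈ S) (hb : b ∈ T)
    (hab : G.Adj a b) : Conn G (S ∪ T) :=
  (connected_induce_union hS hT ha hb hab).preconnected

lemma Conn.subset_of_forall_adj (hS : Conn G S) {x : V} (hxS : x ∈ S) (hxT : x ∈ T)
    (hT : ∀ u ∈ S, ∀ v ∈ S, u ∈ T → G.Adj u v → v ∈ T) : S ⊆ T := by
  intro y hyS
  by_contra hyT
  obtain ⟨p⟩ := hS ⟨x, hxS⟩ ⟨y, hyS⟩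
  obtain ⟨d, -, hd, hd'⟩ := p.exists_boundary_dart {w | w.1 ∈ T} hxT hyT
  exact hd' (hT _ d.fst.2 _ d.snd.2 hd d.adj)

lemma IsCompOf.compatible (hC : IsCompOf G C U) (hDU : D ⊆ U) (hD : Conn G D) :
    Compatible G D C := by
  obtain ⟨-, hCU, hCconn, hCmax⟩ := hC
  have hunion : Conn G (D ∪ C) → D ∪ C = C :=
    hCmax (D ∪ C) subset_union_right (union_subset hDU hCU)
  by_cases hmeet : (D ∩ C).Nonempty
  · exact Or.inl (hunion (hD.union hCconn hmeet) ▸ subset_union_left)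
  · refine Or.inr (Or.inr ⟨not_nonempty_iff_eq_empty.mp hmeet, fun a ha b hb hab => hmeet ?_⟩)
    exact ⟨a, ha, hunion (hD.union_of_adj hCconn ha hb hab) ▸ Or.inl ha⟩

lemma exists_isCompOf [Finite V] {x : V} (hx : x ∈ U) : ∃ C, x ∈ C ∧ IsCompOf G C U := by
  obtain ⟨C, -, hC⟩ := Finite.exists_le_maximal (p := fun D : Set V => x ∈ D ∧ D ⊆ U ∧ Conn G D)
    (a := {x}) ⟨rfl, singleton_subset_iff.mpr hx, conn_singleton x⟩
  obtain ⟨hxC, hCU, hCconn⟩ := hC.prop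
  exact ⟨C, hxC, ⟨x, hxC⟩, hCU, hCconn,
    fun D hCD hDU hD => hC.eq_of_superset ⟨hCD hxC, hDU, hD⟩ hCD⟩

end Connectivity

section Compatible

variable {I J S : Set V} {𝓕 𝓘 : Set (Set V)}

lemma Compatible.symm (h : Compatible G I J) : Compatible G J I := by
  rcases h with h | h | ⟨hdisj, hadj⟩
  · exact Or.inr (Or.inl h)
  · exact Or.inl h
  · exact Or.inr (Or.inr ⟨inter_comm I J ▸ hdisj, fun a ha b hb hab => hadj b hb a ha hab.symm⟩)

lemma exists_mem_subset_of_pairwise_compatible [Finite V] (h𝓕 : 𝓕.Pairwise (Compatible G))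
    (hS : S.Nonempty) (hSconn : Conn G S) (hS𝓕 : S ⊆ ⋃₀ 𝓕) : ∃ K ∈ 𝓕, S ⊆ K := by
  obtain ⟨s, hs⟩ := hS
  obtain ⟨K₀, hK₀, hsK₀⟩ := hS𝓕 hs
  obtain ⟨K, hK₀K, hK⟩ := Finite.exists_le_maximal (p := (· ∈ 𝓕)) hK₀
  refine ⟨K, hK.prop, hSconn.subset_of_forall_adj hs (hK₀K hsK₀) ?_⟩
  intro u _ v hv huK huv
  obtain ⟨K', hK', hvK'⟩ := hS𝓕 hv
  by_cases hK'K : K' = K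
  · exact hK'K ▸ hvK'
  rcases h𝓕 hK' hK.prop hK'K with h | h | ⟨-, hadj⟩
  · exact h hvK'
  · exact absurd (hK.eq_of_subset hK' h).symm hK'K
  · exact absurd huv.symm (hadj v hvK' u huK)

lemma Nested.compatible (hN : Nested G 𝓘) (hI : I ∈ 𝓘) (hJ : J ∈ 𝓘) : Compatible G I J := by
  rcases hN.2.1 I hI J hJ with h | h | hdisj
  · exact Or.inl h
  · exact Or.inr (Or.inl h)
  refine Or.inr (Or.inr ⟨hdisj, fun a ha b hb hab => ?_⟩)
  have hpair : ({I, J} : Set (Set V)).Pairwise fun A B => A ∩ B = ∅ :=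
    pairwise_pair.mpr fun _ => ⟨hdisj, inter_comm I J ▸ hdisj⟩
  have hcomp := (hN.2.2 {I, J} (pair_subset hI hJ) hpair I).mpr (mem_insert I {J})
  rw [sUnion_pair] at hcomp
  have hIJ_eq : I ∪ J = I :=
    hcomp.2.2.2 (I ∪ J) subset_union_left Subset.rfl
      ((hN.1 I hI).2.union_of_adj (hN.1 J hJ).2 ha hb hab)
  exact eq_empty_iff_forall_notMem.mp hdisj b ⟨hIJ_eq ▸ Or.inr hb, hb⟩

lemma nested_of_pairwise_compatible [Finite V] (hmem : ∀ S ∈ 𝓘, S.Nonempty ∧ Conn G S)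
    (h𝓘 : 𝓘.Pairwise (Compatible G)) : Nested G 𝓘 := by
  refine ⟨hmem, fun S hS T hT => ?_, fun 𝓙 h𝓙 hdisj C => ?_⟩
  · by_cases hST : S = T
    · exact Or.inl hST.subset
    rcases h𝓘 hS hT hST with h | h | h
    exacts [Or.inl h, Or.inr (Or.inl h), Or.inr (Or.inr h.1)]
  have h𝓙c : 𝓙.Pairwise (Compatible G) := h𝓘.mono h𝓙
  constructor
  · rintro ⟨hCne, hC𝓙, hCconn, hCmax⟩
    obtain ⟨K, hK, hCK⟩ := exists_mem_subset_of_pairwise_compatible h𝓙c hCne hCconn hC𝓙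
    exact hCmax K hCK (subset_sUnion_of_mem hK) (hmem K (h𝓙 hK)).2 ▸ hK
  · intro hC
    obtain ⟨hCne, hCconn⟩ := hmem C (h𝓙 hC)
    refine ⟨hCne, subset_sUnion_of_mem hC, hCconn, fun D hCD hD𝓙 hD => ?_⟩
    obtain ⟨K, hK, hDK⟩ :=
      exists_mem_subset_of_pairwise_compatible h𝓙c (hCne.mono hCD) hD hD𝓙
    have hKC : K = C := by
      by_contra hne
      obtain ⟨c, hc⟩ := hCne
      exact eq_empty_iff_forall_notMem.mp (hdisj hK hC hne) c ⟨hDK (hCD hc), hc⟩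
    exact Subset.antisymm (hKC ▸ hDK) hCD

end Compatible

variable {𝓘 : Set (Set V)} {Iv : V → Set V}

lemma Nested.exists_mem_subset_leastContaining [Finite V] (hN : Nested G 𝓘)
    (hIv : IsLeastContaining 𝓘 Iv) {S : Set V} (hS : S.Nonempty) (hSconn : Conn G S) :
    ∃ m ∈ S, S ⊆ Iv m := by
  have hcompat : (Iv '' S).Pairwise (Compatible G) := by
    rintro _ ⟨v, -, rfl⟩ _ ⟨w, -, rfl⟩ -
    exact hN.compatible (hIv v).1 (hIv w).1
  obtain ⟨_, ⟨m, hm, rfl⟩, hSm⟩ := exists_mem_subset_of_pairwise_compatible hcompat hS hSconn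
    fun v hv => ⟨Iv v, mem_image_of_mem Iv hv, (hIv v).2.1⟩
  exact ⟨m, hm, hSm⟩

lemma MaxNested.injective_leastContaining [Finite V] (hM : MaxNested G 𝓘)
    (hIv : IsLeastContaining 𝓘 Iv) : Function.Injective Iv := by
  intro m m' hIv_eq
  by_contra hne
  obtain ⟨hN, -, hmax⟩ := hM
  have hm'J : m' ∈ Iv m := hIv_eq ▸ (hIv m').2.1
  obtain ⟨C, hmC, hC⟩ := exists_isCompOf (G := G) (show m ∈ Iv m \ {m'} from ⟨(hIv m).2.1, hne⟩)
  have hCJ : C ⊆ Iv m := hC.2.1.trans sdiff_subset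
  have hC𝓘 : C ∉ 𝓘 := fun h => (hC.2.1 ((hIv m).2.2 C h hmC hm'J)).2 rfl
  have hcompat : ∀ I ∈ 𝓘, Compatible G C I := by
    intro I hI
    by_cases hm'I : m' ∈ I
    · exact Or.inl (hCJ.trans (hIv_eq ▸ (hIv m').2.2 I hI hm'I))
    rcases hN.compatible hI (hIv m).1 with hIJ | hJI | ⟨hdisj, hadj⟩
    · refine (hC.compatible (fun v hv => ⟨hIJ hv, ?_⟩) (hN.1 I hI).2).symm
      rintro rfl
      exact hm'I hv
    · exact absurd (hJI hm'J) hm'I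
    · exact Or.inr (Or.inr ⟨eq_empty_of_forall_notMem fun x hx =>
        eq_empty_iff_forall_notMem.mp hdisj x ⟨hx.2, hCJ hx.1⟩,
        fun a ha b hb hab => hadj b hb a (hCJ ha) hab.symm⟩)
  have hnested : Nested G (insert C 𝓘) := by
    refine nested_of_pairwise_compatible ?_ ?_
    · rintro S (rfl | hS)
      exacts [⟨⟨m, hmC⟩, hC.2.2.1⟩, hN.1 S hS]
    · exact pairwise_insert.mpr ⟨fun I hI J hJ _ => hN.compatible hI hJ,
        fun I hI _ => ⟨hcompat I hI, (hcompat I hI).symm⟩⟩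
  exact hC𝓘 (hmax _ hnested (subset_insert C 𝓘) ▸ mem_insert C 𝓘)

end Paper

theorem statement_9_general {V : Type*} [Fintype V] (G : SimpleGraph V)
    (𝓘 : Set (Set V)) (h𝓘 : Paper.MaxNested G 𝓘)
    (Iv : V → Set V) (hIv : Paper.IsLeastContaining 𝓘 Iv) :
    ∀ S : Set V, S.Nonempty → Paper.Conn G S → ∃! m : V, m ∈ S ∧ S ⊆ Iv m := by
  intro S hS hSconn
  obtain ⟨m, hmS, hSm⟩ := h𝓘.1.exists_mem_subset_leastContaining hIv hS hSconn
  refine ⟨m, ⟨hmS, hSm⟩, fun m' ⟨hm'S, hSm'⟩ => h𝓘.injective_leastContaining hIv ?_⟩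
  exact Set.Subset.antisymm ((hIv m').2.2 _ (hIv m).1 (hSm hm'S))
    ((hIv m).2.2 _ (hIv m').1 (hSm' hmS))

/-- Let `𝓘` be a maximal nested collection on the vertex set `V` of a finite tree. Then
every nonempty connected subset `S ⊆ V` contains a unique vertex `m` with `S ⊆ I_m`;
equivalently, `S` has a unique maximum with respect to the order `v ≤ w ↔ v ∈ I_w`. -/
theorem statement_9 {V : Type*} [Fintype V] (G : SimpleGraph V) (hG : G.IsTree)
    (𝓘 : Set (Set V)) (h𝓘 : Paper.MaxNested G 𝓘)
    (Iv : V → Set V) (hIv : Paper.IsLeastContaining 𝓘 Iv) :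
    ∀ S : Set V, S.Nonempty → Paper.Conn G S → ∃! m : V, m ∈ S ∧ S ⊆ Iv m :=
  statement_9_general G 𝓘 h𝓘 Iv hIv
end
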